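/- Let A ∈ ℝ^{M×N} satisfy RIP of order R+K with constant δ < 1, let X ∈ ℝ^{N×L} be arbitrary with B = AX + W, and let X̂ be the MMV-FACS estimate with support T̂ ⊆ Γ, |T̂| = K, |Γ| ≤ R. Then ‖X − X̂‖_F ≤ C₁‖X − X^K‖_F + C₂‖X − X^K‖_{2,1} + C₃‖X_{Γᶜ,:}‖_F + ν‖W‖_F, where ν = (3−δ)/(1−δ)², C₁ = 1 + ν√(1+δ), C₂ = ν√(1+δ)/√(R+K), C₃ = (1+δ)/(1−δ)². -/

import Mathlib

open scoped BigOperators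
open Matrix

noncomputable def frob {m n : Type*} [Fintype m] [Fintype n] (X : Matrix m n ℝ) : ℝ :=
  Real.sqrt (∑ i, ∑ j, (X i j) ^ 2)

noncomputable def rowNorm {m n : Type*} [Fintype n] (X : Matrix m n ℝ) (i : m) : ℝ :=
  Real.sqrt (∑ j, (X i j) ^ 2)

noncomputable def norm21 {m n : Type*} [Fintype m] [Fintype n] (X : Matrix m n ℝ) : ℝ :=
  ∑ i, rowNorm X i

noncomputable def restrictRows {m n : Type*} (X : Matrix m n ℝ) (S : Set m) : Matrix m n ℝ :=
  fun i j => S.indicator (fun i' => X i' j) i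

noncomputable def vnorm {m : Type*} [Fintype m] (v : m → ℝ) : ℝ :=
  Real.sqrt (∑ i, (v i) ^ 2)

/-- `X` has at most `s` nonzero rows. -/
def rowSparse {m n : Type*} (X : Matrix m n ℝ) (s : ℕ) : Prop :=
  {i | X i ≠ 0}.ncard ≤ s

/-- Column submatrix of `A` with columns indexed by `S`. -/
def colSub {M N : ℕ} (A : Matrix (Fin M) (Fin N) ℝ) (S : Finset (Fin N)) :
    Matrix (Fin M) {j // j ∈ S} ℝ :=
  A.submatrix id (fun j => (j : Fin N))

/-- `D` is the Moore–Penrose pseudo-inverse of `A` (the four Penrose conditions). -/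
def IsPinv {m n : Type*} [Fintype m] [Fintype n] (A : Matrix m n ℝ) (D : Matrix n m ℝ) : Prop :=
  A * D * A = A ∧ D * A * D = D ∧ (A * D)ᵀ = A * D ∧ (D * A)ᵀ = D * A

/-- Restricted isometry property of order `s` with constant `δ`. -/
def RIP {M N : ℕ} (A : Matrix (Fin M) (Fin N) ℝ) (s : ℕ) (δ : ℝ) : Prop :=
  ∀ x : Fin N → ℝ, {i | x i ≠ 0}.ncard ≤ s →
    (1 - δ) * (∑ i, (x i) ^ 2) ≤ (∑ i, (A.mulVec x i) ^ 2) ∧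
      (∑ i, (A.mulVec x i) ^ 2) ≤ (1 + δ) * (∑ i, (x i) ^ 2)


namespace Facs

noncomputable def fsq {m n : Type*} [Fintype m] [Fintype n] (X : Matrix m n ℝ) : ℝ :=
  ∑ i, ∑ j, (X i j) ^ 2

noncomputable def vsq {m : Type*} [Fintype m] (v : m → ℝ) : ℝ := ∑ i, (v i) ^ 2

lemma vsq_nonneg {m : Type*} [Fintype m] (v : m → ℝ) : 0 ≤ vsq v :=
  Finset.sum_nonneg fun _ _ => sq_nonneg _

lemma fsq_nonneg {m n : Type*} [Fintype m] [Fintype n] (X : Matrix m n ℝ) : 0 ≤ fsq X :=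
  Finset.sum_nonneg fun _ _ => Finset.sum_nonneg fun _ _ => sq_nonneg _

lemma frob_eq {m n : Type*} [Fintype m] [Fintype n] (X : Matrix m n ℝ) :
    frob X = Real.sqrt (fsq X) := rfl

lemma vnorm_eq {m : Type*} [Fintype m] (v : m → ℝ) : vnorm v = Real.sqrt (vsq v) := rfl

lemma frob_nonneg {m n : Type*} [Fintype m] [Fintype n] (X : Matrix m n ℝ) : 0 ≤ frob X :=
  Real.sqrt_nonneg _

lemma vnorm_nonneg {m : Type*} [Fintype m] (v : m → ℝ) : 0 ≤ vnorm v := Real.sqrt_nonneg _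

lemma frob_sq {m n : Type*} [Fintype m] [Fintype n] (X : Matrix m n ℝ) :
    frob X ^ 2 = fsq X := Real.sq_sqrt (fsq_nonneg X)

lemma vnorm_sq {m : Type*} [Fintype m] (v : m → ℝ) : vnorm v ^ 2 = vsq v :=
  Real.sq_sqrt (vsq_nonneg v)

lemma frob_le_frob {m n : Type*} [Fintype m] [Fintype n] {X Y : Matrix m n ℝ}
    (h : fsq X ≤ fsq Y) : frob X ≤ frob Y := Real.sqrt_le_sqrt h

noncomputable def toE {m n : Type*} [Fintype m] [Fintype n] (X : Matrix m n ℝ) :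
    EuclideanSpace ℝ (m × n) := WithLp.toLp 2 (fun p : m × n => X p.1 p.2)

lemma frob_eq_norm {m n : Type*} [Fintype m] [Fintype n] (X : Matrix m n ℝ) :
    frob X = ‖toE X‖ := by
  rw [EuclideanSpace.norm_eq, frob_eq, fsq]
  congr 1
  rw [Fintype.sum_prod_type]
  exact Finset.sum_congr rfl fun p _ => Finset.sum_congr rfl fun q _ => by
    rw [Real.norm_eq_abs, sq_abs]; rfl

lemma toE_add {m n : Type*} [Fintype m] [Fintype n] (X Y : Matrix m n ℝ) :
    toE (X + Y) = toE X + toE Y := rfl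

lemma frob_add_le {m n : Type*} [Fintype m] [Fintype n] (X Y : Matrix m n ℝ) :
    frob (X + Y) ≤ frob X + frob Y := by
  rw [frob_eq_norm, frob_eq_norm, frob_eq_norm, toE_add]; exact norm_add_le _ _

lemma frob_neg {m n : Type*} [Fintype m] [Fintype n] (X : Matrix m n ℝ) :
    frob (-X) = frob X := by
  rw [frob_eq, frob_eq]; congr 1; simp [fsq]

lemma frob_sub_le {m n : Type*} [Fintype m] [Fintype n] (X Y : Matrix m n ℝ) :
    frob (X - Y) ≤ frob X + frob Y := by
  rw [sub_eq_add_neg]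
  exact (frob_add_le X (-Y)).trans (by rw [frob_neg])

end Facs
namespace Facs

variable {N L : ℕ}

/-- rows restricted to a finset -/
noncomputable def rr (X : Matrix (Fin N) (Fin L) ℝ) (P : Finset (Fin N)) :
    Matrix (Fin N) (Fin L) ℝ := fun i j => if i ∈ P then X i j else 0

lemma restrictRows_eq_rr (X : Matrix (Fin N) (Fin L) ℝ) (P : Finset (Fin N)) :
    restrictRows X (P : Set (Fin N)) = rr X P := by
  funext i j; simp [restrictRows, rr, Set.indicator_apply]

lemma fsq_rr (X : Matrix (Fin N) (Fin L) ℝ) (P : Finset (Fin N)) :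
    fsq (rr X P) = ∑ i ∈ P, ∑ j, (X i j) ^ 2 := by
  have h1 : fsq (rr X P) = ∑ i, (if i ∈ P then ∑ j, (X i j) ^ 2 else 0) :=
    Finset.sum_congr rfl fun i _ => by by_cases h : i ∈ P <;> simp [rr, h, fsq]
  rw [h1, Finset.sum_ite_mem, Finset.univ_inter]

lemma fsq_le_fsq {m n : Type*} [Fintype m] [Fintype n] {X Y : Matrix m n ℝ}
    (h : ∀ i j, (X i j) ^ 2 ≤ (Y i j) ^ 2) : fsq X ≤ fsq Y :=
  Finset.sum_le_sum fun i _ => Finset.sum_le_sum fun j _ => h i j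

lemma fsq_rr_le_of_subset (X : Matrix (Fin N) (Fin L) ℝ) {P Q : Finset (Fin N)}
    (h : P ⊆ Q) : fsq (rr X P) ≤ fsq (rr X Q) := by
  rw [fsq_rr, fsq_rr]
  exact Finset.sum_le_sum_of_subset_of_nonneg h
    (fun i _ _ => Finset.sum_nonneg fun j _ => sq_nonneg _)

lemma frob_rr_le_of_subset (X : Matrix (Fin N) (Fin L) ℝ) {P Q : Finset (Fin N)}
    (h : P ⊆ Q) : frob (rr X P) ≤ frob (rr X Q) :=
  frob_le_frob (fsq_rr_le_of_subset X h)

lemma frob_rr_le (X : Matrix (Fin N) (Fin L) ℝ) (P : Finset (Fin N)) :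
    frob (rr X P) ≤ frob X := by
  apply frob_le_frob
  apply fsq_le_fsq
  intro i j
  by_cases h : i ∈ P <;> simp [rr, h, sq_nonneg]

lemma rowSparse_rr (X : Matrix (Fin N) (Fin L) ℝ) (P : Finset (Fin N)) {s : ℕ}
    (h : P.card ≤ s) : rowSparse (rr X P) s := by
  have hsub : {i | rr X P i ≠ 0} ⊆ (P : Set (Fin N)) := by
    intro i hi
    by_contra hip
    have hip' : i ∉ P := by simpa using hip
    exact hi (funext fun j => by simp [rr, hip'])
  calc {i | rr X P i ≠ 0}.ncard ≤ (P : Set (Fin N)).ncard :=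
        Set.ncard_le_ncard hsub P.finite_toSet
    _ = P.card := Set.ncard_coe_finset P
    _ ≤ s := h

/-- extension of a subtype-indexed matrix -/
noncomputable def ext (T : Finset (Fin N)) (C : Matrix {j // j ∈ T} (Fin L) ℝ) :
    Matrix (Fin N) (Fin L) ℝ := fun i j => if h : i ∈ T then C ⟨i, h⟩ j else 0

noncomputable def extv (T : Finset (Fin N)) (c : {j // j ∈ T} → ℝ) : Fin N → ℝ :=
  fun i => if h : i ∈ T then c ⟨i, h⟩ else 0

lemma sum_dite_univ (T : Finset (Fin N)) (g : {j // j ∈ T} → ℝ) :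
    ∑ i, (if h : i ∈ T then g ⟨i, h⟩ else 0) = ∑ i : {j // j ∈ T}, g i := by
  rw [← Finset.sum_add_sum_compl T]
  have h2 : ∑ i ∈ Tᶜ, (if h : i ∈ T then g ⟨i, h⟩ else 0) = 0 :=
    Finset.sum_eq_zero fun i hi => dif_neg (Finset.mem_compl.mp hi)
  have h1 : ∑ i ∈ T, (if h : i ∈ T then g ⟨i, h⟩ else 0) = ∑ i : {j // j ∈ T}, g i := by
    rw [← Finset.sum_coe_sort T (fun i => if h : i ∈ T then g ⟨i, h⟩ else 0)]
    exact Finset.sum_congr rfl fun i _ => by rw [dif_pos i.2]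
  rw [h1, h2, add_zero]

lemma fsq_ext (T : Finset (Fin N)) (C : Matrix {j // j ∈ T} (Fin L) ℝ) :
    fsq (ext T C) = fsq C := by
  rw [fsq, fsq, ← sum_dite_univ T (fun i => ∑ j, (C i j) ^ 2)]
  exact Finset.sum_congr rfl fun i _ => by
    by_cases h : i ∈ T
    · rw [dif_pos h]; exact Finset.sum_congr rfl fun j _ => by rw [ext, dif_pos h]
    · rw [dif_neg h]; simp [ext, h]

lemma frob_ext (T : Finset (Fin N)) (C : Matrix {j // j ∈ T} (Fin L) ℝ) :
    frob (ext T C) = frob C := by rw [frob_eq, frob_eq, fsq_ext]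

lemma vsq_extv (T : Finset (Fin N)) (c : {j // j ∈ T} → ℝ) :
    vsq (extv T c) = vsq c := by
  rw [vsq, vsq, ← sum_dite_univ T (fun i => (c i) ^ 2)]
  exact Finset.sum_congr rfl fun i _ => by
    by_cases h : i ∈ T
    · rw [extv, dif_pos h, dif_pos h]
    · rw [extv, dif_neg h, dif_neg h]; simp

lemma vnorm_extv (T : Finset (Fin N)) (c : {j // j ∈ T} → ℝ) :
    vnorm (extv T c) = vnorm c := by rw [vnorm_eq, vnorm_eq, vsq_extv]

lemma mul_ext {M : ℕ} (A : Matrix (Fin M) (Fin N) ℝ) (T : Finset (Fin N))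
    (C : Matrix {j // j ∈ T} (Fin L) ℝ) : A * ext T C = colSub A T * C := by
  funext i j
  rw [Matrix.mul_apply, Matrix.mul_apply]
  rw [show ∑ k, A i k * ext T C k j
      = ∑ k, (if h : k ∈ T then A i k * C ⟨k, h⟩ j else 0) from
    Finset.sum_congr rfl fun k _ => by
      by_cases h : k ∈ T <;> simp [ext, h]]
  rw [sum_dite_univ T (fun k => A i (k : Fin N) * C k j)]
  rfl

lemma mulVec_extv {M : ℕ} (A : Matrix (Fin M) (Fin N) ℝ) (T : Finset (Fin N))
    (c : {j // j ∈ T} → ℝ) : A.mulVec (extv T c) = (colSub A T).mulVec c := by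
  funext i
  rw [Matrix.mulVec, Matrix.mulVec, dotProduct, dotProduct]
  rw [show ∑ k, A i k * extv T c k
      = ∑ k, (if h : k ∈ T then A i k * c ⟨k, h⟩ else 0) from
    Finset.sum_congr rfl fun k _ => by
      by_cases h : k ∈ T <;> simp [extv, h]]
  rw [sum_dite_univ T (fun k => A i (k : Fin N) * c k)]
  rfl

lemma ext_sub (T : Finset (Fin N)) (C C' : Matrix {j // j ∈ T} (Fin L) ℝ) :
    ext T C - ext T C' = ext T (C - C') := by
  funext i j
  by_cases h : i ∈ T <;> simp [ext, h]

end Facs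
namespace Facs
lemma sum_le_sqrt2 {u v f r2 : ℝ} (hu : 0 ≤ u) (hv : 0 ≤ v) (hf : 0 ≤ f)
    (hr2 : r2 ^ 2 = 2) (hr20 : 0 ≤ r2) (h : u ^ 2 + v ^ 2 ≤ f ^ 2) :
    u + v ≤ r2 * f := by
  nlinarith [sq_nonneg (u - v), mul_nonneg hr20 hf, sq_nonneg (u + v - r2 * f)]
end Facs
namespace Facs

variable {M N L : ℕ}

lemma vsq_eq_zero_iff {m : Type*} [Fintype m] {v : m → ℝ} : vsq v = 0 ↔ v = 0 := by
  constructor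
  · intro h
    funext i
    have h1 := (Finset.sum_eq_zero_iff_of_nonneg
      (fun i _ => sq_nonneg (v i))).mp h i (Finset.mem_univ i)
    exact pow_eq_zero_iff (two_ne_zero) |>.mp h1
  · intro h; simp [h, vsq]

lemma vnorm_eq_zero_iff {m : Type*} [Fintype m] {v : m → ℝ} : vnorm v = 0 ↔ v = 0 := by
  rw [vnorm_eq, Real.sqrt_eq_zero (vsq_nonneg v), vsq_eq_zero_iff]

lemma ncard_supp_le {x : Fin N → ℝ} {P : Finset (Fin N)}
    (h : ∀ i, i ∉ P → x i = 0) : {i | x i ≠ 0}.ncard ≤ P.card := by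
  have hsub : {i | x i ≠ 0} ⊆ (P : Set (Fin N)) := by
    intro i hi
    by_contra hip
    exact hi (h i (by simpa using hip))
  calc {i | x i ≠ 0}.ncard ≤ (P : Set (Fin N)).ncard :=
        Set.ncard_le_ncard hsub P.finite_toSet
    _ = P.card := Set.ncard_coe_finset P

noncomputable def colv {m n : Type*} (X : Matrix m n ℝ) (j : n) : m → ℝ := fun i => X i j

lemma colv_mul {m n p : Type*} [Fintype n] (Q : Matrix m n ℝ) (U : Matrix n p ℝ) (j : p) :
    colv (Q * U) j = Q.mulVec (colv U j) := by
  funext i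
  simp [colv, Matrix.mul_apply, Matrix.mulVec, dotProduct]

lemma fsq_eq_sum_cols {m n : Type*} [Fintype m] [Fintype n] (X : Matrix m n ℝ) :
    fsq X = ∑ j, vsq (colv X j) := Finset.sum_comm

-- RIP, vector form restated
section RIPsec
variable {A : Matrix (Fin M) (Fin N) ℝ} {s : ℕ} {δ : ℝ}

lemma rip_up (hRIP : RIP A s δ) {x : Fin N → ℝ} (h : {i | x i ≠ 0}.ncard ≤ s) :
    vsq (A.mulVec x) ≤ (1 + δ) * vsq x := (hRIP x h).2

lemma rip_lo (hRIP : RIP A s δ) {x : Fin N → ℝ} (h : {i | x i ≠ 0}.ncard ≤ s) :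
    (1 - δ) * vsq x ≤ vsq (A.mulVec x) := (hRIP x h).1

lemma colv_sparse {U : Matrix (Fin N) (Fin L) ℝ} (hU : rowSparse U s) (j : Fin L) :
    {i | colv U j i ≠ 0}.ncard ≤ s := by
  refine le_trans (Set.ncard_le_ncard ?_ (Set.toFinite _)) hU
  intro i hi
  simp only [Set.mem_setOf_eq] at hi ⊢
  intro h0
  exact hi (by simp [colv, h0])

lemma matRIP_upper (hRIP : RIP A s δ) {U : Matrix (Fin N) (Fin L) ℝ}
    (hU : rowSparse U s) : fsq (A * U) ≤ (1 + δ) * fsq U := by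
  rw [fsq_eq_sum_cols, fsq_eq_sum_cols, Finset.mul_sum]
  refine Finset.sum_le_sum fun j _ => ?_
  rw [colv_mul]
  exact rip_up hRIP (colv_sparse hU j)

lemma matRIP_lower (hRIP : RIP A s δ) {U : Matrix (Fin N) (Fin L) ℝ}
    (hU : rowSparse U s) : (1 - δ) * fsq U ≤ fsq (A * U) := by
  rw [fsq_eq_sum_cols, fsq_eq_sum_cols, Finset.mul_sum]
  refine Finset.sum_le_sum fun j _ => ?_
  rw [colv_mul]
  exact rip_lo hRIP (colv_sparse hU j)

lemma frob_matRIP_upper (hRIP : RIP A s δ) (hδ0 : 0 ≤ δ) {U : Matrix (Fin N) (Fin L) ℝ}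
    (hU : rowSparse U s) : frob (A * U) ≤ Real.sqrt (1 + δ) * frob U := by
  rw [frob_eq, frob_eq, ← Real.sqrt_mul (by linarith : (0:ℝ) ≤ 1 + δ)]
  exact Real.sqrt_le_sqrt (matRIP_upper hRIP hU)

lemma frob_matRIP_lower (hRIP : RIP A s δ) (hδ : δ < 1) {U : Matrix (Fin N) (Fin L) ℝ}
    (hU : rowSparse U s) : Real.sqrt (1 - δ) * frob U ≤ frob (A * U) := by
  rw [frob_eq, frob_eq, ← Real.sqrt_mul (by linarith : (0:ℝ) ≤ 1 - δ)]
  exact Real.sqrt_le_sqrt (matRIP_lower hRIP hU)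

end RIPsec

-- dot product basics
lemma vsq_eq_dot {m : Type*} [Fintype m] (v : m → ℝ) : vsq v = v ⬝ᵥ v := by
  simp [vsq, dotProduct, sq]

lemma vsq_add {m : Type*} [Fintype m] (u v : m → ℝ) :
    vsq (u + v) = vsq u + 2 * (u ⬝ᵥ v) + vsq v := by
  simp only [vsq, dotProduct, Pi.add_apply, Finset.mul_sum]
  rw [← Finset.sum_add_distrib, ← Finset.sum_add_distrib]
  exact Finset.sum_congr rfl fun i _ => by ring

lemma vsq_sub {m : Type*} [Fintype m] (u v : m → ℝ) :
    vsq (u - v) = vsq u - 2 * (u ⬝ᵥ v) + vsq v := by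
  simp only [vsq, dotProduct, Pi.sub_apply, Finset.mul_sum]
  rw [← Finset.sum_sub_distrib, ← Finset.sum_add_distrib]
  exact Finset.sum_congr rfl fun i _ => by ring

lemma dot_smul_smul {m : Type*} [Fintype m] (u v : m → ℝ) (a b : ℝ) :
    (b • u) ⬝ᵥ (a • v) = (b * a) * (u ⬝ᵥ v) := by
  simp only [dotProduct, Pi.smul_apply, smul_eq_mul, Finset.mul_sum]
  exact Finset.sum_congr rfl fun i _ => by ring

lemma vsq_smul {m : Type*} [Fintype m] (v : m → ℝ) (a : ℝ) :
    vsq (a • v) = a ^ 2 * vsq v := by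
  simp only [vsq, Pi.smul_apply, smul_eq_mul, Finset.mul_sum]
  exact Finset.sum_congr rfl fun i _ => by ring

-- projection lemmas
section Proj
variable {P : Matrix (Fin M) (Fin M) ℝ}

lemma proj_dot (hPsym : Pᵀ = P) (hPidem : P * P = P) (u : Fin M → ℝ) : vsq (P.mulVec u) = (P.mulVec u) ⬝ᵥ u := by
  rw [vsq_eq_dot]
  conv_lhs => rw [Matrix.dotProduct_mulVec]
  have h1 : (P.mulVec u) ᵥ* P = P.mulVec u := by
    rw [← Matrix.mulVec_transpose, hPsym, Matrix.mulVec_mulVec, hPidem]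
  rw [h1]

lemma proj_contract (hPsym : Pᵀ = P) (hPidem : P * P = P) (u : Fin M → ℝ) : vsq (P.mulVec u) ≤ vsq u := by
  have h0 : 0 ≤ vsq (u - P.mulVec u) := vsq_nonneg _
  rw [vsq_sub] at h0
  have h1 : u ⬝ᵥ (P.mulVec u) = vsq (P.mulVec u) := by
    rw [dotProduct_comm, proj_dot hPsym hPidem]
  linarith

end Proj

end Facs
namespace Facs

variable {M N L : ℕ}

section Pinv

variable {A : Matrix (Fin M) (Fin N) ℝ} {s : ℕ} {δ : ℝ}

-- off-diagonal inner product bound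
lemma offdiag_ip (hRIP : RIP A s δ) (hδ0 : 0 ≤ δ) (hδ : δ < 1)
    (x y : Fin N → ℝ)
    (hsp : {i | x i ≠ 0}.ncard + {i | y i ≠ 0}.ncard ≤ s)
    (hdisj : ∀ i, x i = 0 ∨ y i = 0) :
    (A.mulVec x) ⬝ᵥ (A.mulVec y) ≤ δ * (vnorm x * vnorm y) := by
  by_cases hx0 : x = 0
  · simp only [hx0, Matrix.mulVec_zero, zero_dotProduct]
    exact mul_nonneg hδ0 (mul_nonneg (vnorm_nonneg _) (vnorm_nonneg _))
  by_cases hy0 : y = 0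
  · simp only [hy0, Matrix.mulVec_zero, dotProduct_zero]
    exact mul_nonneg hδ0 (mul_nonneg (vnorm_nonneg _) (vnorm_nonneg _))
  set a := vnorm x with ha
  set b := vnorm y with hb
  have ha' : 0 < a := lt_of_le_of_ne (vnorm_nonneg x) (fun h => hx0 (vnorm_eq_zero_iff.mp h.symm))
  have hb' : 0 < b := lt_of_le_of_ne (vnorm_nonneg y) (fun h => hy0 (vnorm_eq_zero_iff.mp h.symm))
  set x1 := b • x with hx1
  set y1 := a • y with hy1
  have hsupp : ∀ (u : Fin N → ℝ), (u = x1 + y1 ∨ u = x1 - y1) → {i | u i ≠ 0}.ncard ≤ s := by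
    intro u hu
    refine le_trans (le_trans (Set.ncard_le_ncard ?_ (Set.toFinite _))
      (Set.ncard_union_le _ _)) hsp
    intro i hi
    simp only [Set.mem_setOf_eq, Set.mem_union]
    by_contra hc
    push_neg at hc
    apply hi
    rcases hu with h | h <;>
      simp [h, hx1, hy1, hc.1, hc.2]
  have hdot : x1 ⬝ᵥ y1 = 0 := by
    apply Finset.sum_eq_zero
    intro i _
    rcases hdisj i with h | h <;> simp [hx1, hy1, h]
  have hvadd : vsq (x1 + y1) = 2 * (a ^ 2 * b ^ 2) := by
    rw [vsq_add, hdot, vsq_smul, vsq_smul, ← vnorm_sq, ← vnorm_sq, ← ha, ← hb]; ring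
  have hvsub : vsq (x1 - y1) = 2 * (a ^ 2 * b ^ 2) := by
    rw [vsq_sub, hdot, vsq_smul, vsq_smul, ← vnorm_sq, ← vnorm_sq, ← ha, ← hb]; ring
  have hup := rip_up hRIP (hsupp _ (Or.inl rfl))
  have hlo := rip_lo hRIP (hsupp _ (Or.inr rfl))
  rw [hvadd] at hup
  rw [hvsub] at hlo
  have hAadd : A.mulVec (x1 + y1) = A.mulVec x1 + A.mulVec y1 := Matrix.mulVec_add A x1 y1
  have hAsub : A.mulVec (x1 - y1) = A.mulVec x1 - A.mulVec y1 := Matrix.mulVec_sub A x1 y1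
  rw [hAadd, vsq_add] at hup
  rw [hAsub, vsq_sub] at hlo
  have hsm : (A.mulVec x1) ⬝ᵥ (A.mulVec y1) = (b * a) * ((A.mulVec x) ⬝ᵥ (A.mulVec y)) := by
    rw [hx1, hy1, Matrix.mulVec_smul, Matrix.mulVec_smul, dot_smul_smul]
  rw [hsm] at hup hlo
  have hkey : 4 * (b * a) * ((A.mulVec x) ⬝ᵥ (A.mulVec y)) ≤ 4 * (b * a) * (δ * (a * b)) := by
    nlinarith [hup, hlo]
  have hpos : (0:ℝ) < 4 * (b * a) := by positivity
  have := le_of_mul_le_mul_left (by linarith [hkey] :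
    (4 * (b * a)) * ((A.mulVec x) ⬝ᵥ (A.mulVec y)) ≤ (4 * (b * a)) * (δ * (a * b))) hpos
  linarith [this]

variable {T : Finset (Fin N)} {D : Matrix {j // j ∈ T} (Fin M) ℝ}

lemma colSub_inj (hRIP : RIP A s δ) (hδ : δ < 1) (hT : T.card ≤ s)
    {c : {j // j ∈ T} → ℝ} (h : (colSub A T).mulVec c = 0) : c = 0 := by
  have hx : A.mulVec (extv T c) = 0 := by rw [mulVec_extv, h]
  have hsp : {i | extv T c i ≠ 0}.ncard ≤ s :=
    le_trans (ncard_supp_le (fun i hi => by simp [extv, hi])) hT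
  have hlo := rip_lo hRIP hsp
  rw [hx] at hlo
  have h0 : vsq (0 : Fin M → ℝ) = 0 := by simp [vsq]
  rw [h0] at hlo
  have hz : vsq (extv T c) = 0 := by nlinarith [vsq_nonneg (extv T c)]
  have hz2 : extv T c = 0 := vsq_eq_zero_iff.mp hz
  funext j
  have := congrFun hz2 (j : Fin N)
  rw [extv] at this
  rw [dif_pos j.2] at this
  simpa using this

lemma mat_eq_zero_of_mulVec {m n : ℕ} {Q : Matrix (Fin m) (Fin n) ℝ}
    (h : ∀ v, Q.mulVec v = 0) : Q = 0 := by
  ext i j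
  have := congrFun (h (Pi.single j 1)) i
  rw [Matrix.mulVec_single] at this
  simpa using this

lemma mat_eq_zero_of_mulVec' {m : Type*} [Fintype m] [DecidableEq m]
    {Q : Matrix {j // j ∈ T} m ℝ} (h : ∀ v, Q.mulVec v = 0) : Q = 0 := by
  ext i j
  have := congrFun (h (Pi.single j 1)) i
  rw [Matrix.mulVec_single] at this
  simpa using this

lemma pinv_leftInv (hRIP : RIP A s δ) (hδ : δ < 1) (hT : T.card ≤ s)
    (hD : IsPinv (colSub A T) D) : D * colSub A T = 1 := by
  have hz : colSub A T * (D * colSub A T - 1) = 0 := by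
    rw [Matrix.mul_sub, ← Matrix.mul_assoc, hD.1, Matrix.mul_one, sub_self]
  have hv : ∀ v, (D * colSub A T - 1).mulVec v = 0 := by
    intro v
    apply colSub_inj hRIP hδ hT
    rw [Matrix.mulVec_mulVec, hz]
    simp [Matrix.zero_mulVec]
  have := mat_eq_zero_of_mulVec' hv
  rwa [sub_eq_zero] at this

lemma pinv_Psym (hD : IsPinv (colSub A T) D) :
    (colSub A T * D)ᵀ = colSub A T * D := hD.2.2.1

lemma pinv_Pidem (hD : IsPinv (colSub A T) D) :
    (colSub A T * D) * (colSub A T * D) = colSub A T * D := by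
  rw [← Matrix.mul_assoc, Matrix.mul_assoc (colSub A T) D (colSub A T), ← Matrix.mul_assoc, hD.1]

lemma pinv_noise_vec (hRIP : RIP A s δ) (hδ : δ < 1) (hT : T.card ≤ s)
    (hD : IsPinv (colSub A T) D) (w : Fin M → ℝ) :
    vnorm (D.mulVec w) ≤ vnorm w / Real.sqrt (1 - δ) := by
  set c := D.mulVec w with hc
  have hAx : A.mulVec (extv T c) = (colSub A T * D).mulVec w := by
    rw [mulVec_extv, hc, Matrix.mulVec_mulVec]
  have hsp : {i | extv T c i ≠ 0}.ncard ≤ s :=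
    le_trans (ncard_supp_le (fun i hi => by simp [extv, hi])) hT
  have hlo := rip_lo hRIP hsp
  rw [hAx] at hlo
  have hcontr : vsq ((colSub A T * D).mulVec w) ≤ vsq w :=
    proj_contract (pinv_Psym hD) (pinv_Pidem hD) w
  have h1 : (1 - δ) * vsq (extv T c) ≤ vsq w := le_trans hlo hcontr
  have h2 : vsq (extv T c) ≤ vsq w / (1 - δ) := by
    rw [le_div_iff₀ (by linarith : (0:ℝ) < 1 - δ)]
    linarith
  have h3 : vnorm (extv T c) ≤ vnorm w / Real.sqrt (1 - δ) := by
    rw [vnorm_eq, vnorm_eq, ← Real.sqrt_div (vsq_nonneg w)]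
    exact Real.sqrt_le_sqrt h2
  rwa [vnorm_extv] at h3

lemma pinv_offdiag_vec (hRIP : RIP A s δ) (hδ0 : 0 ≤ δ) (hδ : δ < 1)
    (hD : IsPinv (colSub A T) D)
    (P : Finset (Fin N)) (hPT : ∀ i ∈ T, i ∉ P) (hcard : P.card + T.card ≤ s)
    (y : Fin N → ℝ) (hy : ∀ i, i ∉ P → y i = 0) :
    vnorm (D.mulVec (A.mulVec y)) ≤ (δ / (1 - δ)) * vnorm y := by
  set c := D.mulVec (A.mulVec y) with hc
  set x := extv T c with hx
  have hAx : A.mulVec x = (colSub A T * D).mulVec (A.mulVec y) := by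
    rw [hx, mulVec_extv, hc, Matrix.mulVec_mulVec]
  have h1 : vsq (A.mulVec x) = (A.mulVec x) ⬝ᵥ (A.mulVec y) := by
    rw [hAx]; exact proj_dot (pinv_Psym hD) (pinv_Pidem hD) _
  have hspx : {i | x i ≠ 0}.ncard ≤ T.card :=
    ncard_supp_le (fun i hi => by simp [hx, extv, hi])
  have hspy : {i | y i ≠ 0}.ncard ≤ P.card := ncard_supp_le hy
  have h2 : (A.mulVec x) ⬝ᵥ (A.mulVec y) ≤ δ * (vnorm x * vnorm y) := by
    apply offdiag_ip hRIP hδ0 hδ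
    · omega
    · intro i
      by_cases hiT : i ∈ T
      · exact Or.inr (hy i (hPT i hiT))
      · exact Or.inl (by simp [hx, extv, hiT])
  have h3 : (1 - δ) * vsq x ≤ vsq (A.mulVec x) :=
    rip_lo hRIP (le_trans hspx (by omega))
  have h4 : (1 - δ) * vnorm x ^ 2 ≤ δ * (vnorm x * vnorm y) := by
    rw [vnorm_sq]; linarith
  have hvx : vnorm x = vnorm c := vnorm_extv T c
  rw [← hvx]
  by_cases hx0 : vnorm x = 0
  · rw [hx0]
    have h6 : (0:ℝ) ≤ δ / (1 - δ) := div_nonneg hδ0 (by linarith)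
    exact mul_nonneg h6 (vnorm_nonneg _)
  · have hxpos : 0 < vnorm x := lt_of_le_of_ne (vnorm_nonneg x) (Ne.symm hx0)
    have h5 : (1 - δ) * vnorm x ≤ δ * vnorm y := by
      have := le_of_mul_le_mul_right
        (by nlinarith [h4] : ((1 - δ) * vnorm x) * vnorm x ≤ (δ * vnorm y) * vnorm x) hxpos
      exact this
    rw [div_mul_eq_mul_div, le_div_iff₀ (by linarith : (0:ℝ) < 1 - δ)]
    linarith

-- matrix wrappers
lemma pinv_noise_mat (hRIP : RIP A s δ) (hδ : δ < 1) (hT : T.card ≤ s)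
    (hD : IsPinv (colSub A T) D) (Wm : Matrix (Fin M) (Fin L) ℝ) :
    frob (D * Wm) ≤ frob Wm / Real.sqrt (1 - δ) := by
  have hsd : (0:ℝ) < 1 - δ := by linarith
  have hcols : fsq (D * Wm) ≤ fsq Wm / (1 - δ) := by
    rw [fsq_eq_sum_cols, fsq_eq_sum_cols (Wm), Finset.sum_div]
    refine Finset.sum_le_sum fun j _ => ?_
    rw [colv_mul]
    have h := pinv_noise_vec hRIP hδ hT hD (colv Wm j)
    have h2 := mul_le_mul h h (vnorm_nonneg _) (le_trans (vnorm_nonneg _) h)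
    rw [← pow_two, ← pow_two] at h2
    rw [vnorm_sq] at h2
    rw [div_pow, vnorm_sq, Real.sq_sqrt (le_of_lt hsd)] at h2
    exact h2
  rw [frob_eq, frob_eq, ← Real.sqrt_div (fsq_nonneg Wm)]
  exact Real.sqrt_le_sqrt hcols

lemma pinv_offdiag_mat (hRIP : RIP A s δ) (hδ0 : 0 ≤ δ) (hδ : δ < 1)
    (hD : IsPinv (colSub A T) D)
    (P : Finset (Fin N)) (hPT : ∀ i ∈ T, i ∉ P) (hcard : P.card + T.card ≤ s)
    (Y : Matrix (Fin N) (Fin L) ℝ) (hY : ∀ i, i ∉ P → ∀ j, Y i j = 0) :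
    frob (D * (A * Y)) ≤ (δ / (1 - δ)) * frob Y := by
  have hq : (0:ℝ) ≤ δ / (1 - δ) := by
    apply div_nonneg hδ0; linarith
  have hcols : fsq (D * (A * Y)) ≤ (δ / (1 - δ)) ^ 2 * fsq Y := by
    rw [fsq_eq_sum_cols, fsq_eq_sum_cols (Y), Finset.mul_sum]
    refine Finset.sum_le_sum fun j _ => ?_
    rw [colv_mul, colv_mul]
    have h := pinv_offdiag_vec hRIP hδ0 hδ hD P hPT hcard (colv Y j)
      (fun i hi => by simp [colv, hY i hi j])
    have h2 := mul_le_mul h h (vnorm_nonneg _) (mul_nonneg hq (vnorm_nonneg _))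
    rw [← pow_two, ← pow_two] at h2
    rw [vnorm_sq, mul_pow, vnorm_sq] at h2
    exact h2
  rw [frob_eq, frob_eq, ← Real.sqrt_sq hq, ← Real.sqrt_mul (sq_nonneg _)]
  exact Real.sqrt_le_sqrt hcols

end Pinv

end Facs
namespace Facs

variable {M N L : ℕ}

lemma rowNorm_nonneg {m n : Type*} [Fintype n] (X : Matrix m n ℝ) (i : m) :
    0 ≤ rowNorm X i := Real.sqrt_nonneg _

lemma rowNorm_sq {m n : Type*} [Fintype n] (X : Matrix m n ℝ) (i : m) :
    rowNorm X i ^ 2 = ∑ j, (X i j) ^ 2 :=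
  Real.sq_sqrt (Finset.sum_nonneg fun _ _ => sq_nonneg _)

lemma norm21_nonneg {m n : Type*} [Fintype m] [Fintype n] (X : Matrix m n ℝ) :
    0 ≤ norm21 X := Finset.sum_nonneg fun i _ => rowNorm_nonneg X i

lemma rowNorm_rr (X : Matrix (Fin N) (Fin L) ℝ) (P : Finset (Fin N)) (i : Fin N) :
    rowNorm (rr X P) i = if i ∈ P then rowNorm X i else 0 := by
  by_cases h : i ∈ P <;> simp [rowNorm, rr, h]

lemma norm21_rr (X : Matrix (Fin N) (Fin L) ℝ) (P : Finset (Fin N)) :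
    norm21 (rr X P) = ∑ i ∈ P, rowNorm X i := by
  rw [norm21]
  rw [show ∑ i, rowNorm (rr X P) i = ∑ i, if i ∈ P then rowNorm X i else 0 from
    Finset.sum_congr rfl fun i _ => rowNorm_rr X P i]
  rw [Finset.sum_ite_mem, Finset.univ_inter]

lemma norm21_split (X : Matrix (Fin N) (Fin L) ℝ) (P : Finset (Fin N)) :
    norm21 (rr X P) + norm21 (rr X Pᶜ) = norm21 X := by
  rw [norm21_rr, norm21_rr, norm21]
  rw [← Finset.sum_add_sum_compl P (rowNorm X)]

lemma fsq_rr_rowNorm (X : Matrix (Fin N) (Fin L) ℝ) (P : Finset (Fin N)) :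
    fsq (rr X P) = ∑ i ∈ P, rowNorm X i ^ 2 := by
  rw [fsq_rr]
  exact Finset.sum_congr rfl fun i _ => (rowNorm_sq X i).symm

/-- selection: if rows of T dominate, sums of nonneg row-scores over a smaller set are ≤. -/
lemma sel_sum (ρ : Fin N → ℝ) (hρ : ∀ i, 0 ≤ ρ i) (T Ω : Finset (Fin N))
    (hcard : Ω.card ≤ T.card) (hdom : ∀ i ∈ T, ∀ j ∉ T, ρ j ≤ ρ i) :
    ∑ i ∈ Ω, ρ i ≤ ∑ i ∈ T, ρ i := by
  rw [← Finset.sum_inter_add_sum_sdiff Ω T ρ, ← Finset.sum_inter_add_sum_sdiff T Ω ρ]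
  have hint : Ω ∩ T = T ∩ Ω := Finset.inter_comm Ω T
  rw [hint]
  refine add_le_add_right ?_ _
  -- ∑ over Ω \ T ≤ ∑ over T \ Ω
  have hc2 : (Ω \ T).card ≤ (T \ Ω).card := by
    have h1 := Finset.card_inter_add_card_sdiff Ω T
    have h2 := Finset.card_inter_add_card_sdiff T Ω
    rw [Finset.inter_comm] at h1
    omega
  by_cases hne : (Ω \ T).Nonempty
  · have hne2 : (T \ Ω).Nonempty := Finset.card_pos.mp
      (lt_of_lt_of_le (Finset.card_pos.mpr hne) hc2)
    obtain ⟨i0, hi0, hmin⟩ := Finset.exists_min_image (T \ Ω) ρ hne2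
    have hi0T : i0 ∈ T := (Finset.mem_sdiff.mp hi0).1
    calc ∑ i ∈ Ω \ T, ρ i ≤ ∑ _i ∈ Ω \ T, ρ i0 :=
          Finset.sum_le_sum fun j hj =>
            hdom i0 hi0T j (Finset.mem_sdiff.mp hj).2
      _ = (Ω \ T).card * ρ i0 := by rw [Finset.sum_const, nsmul_eq_mul]
      _ ≤ (T \ Ω).card * ρ i0 := by
          apply mul_le_mul_of_nonneg_right _ (hρ i0)
          exact_mod_cast hc2
      _ = ∑ _i ∈ T \ Ω, ρ i0 := by rw [Finset.sum_const, nsmul_eq_mul]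
      _ ≤ ∑ i ∈ T \ Ω, ρ i := Finset.sum_le_sum fun j hj => hmin j hj
  · rw [Finset.not_nonempty_iff_eq_empty.mp hne]
    simp only [Finset.sum_empty]
    exact Finset.sum_nonneg fun i _ => hρ i

/-- existence of a top-k subset for any score -/
lemma exists_top (r : Fin N → ℝ) : ∀ k, k ≤ N →
    ∃ B : Finset (Fin N), B.card = k ∧ ∀ i ∈ B, ∀ j ∉ B, r j ≤ r i := by
  intro k
  induction k with
  | zero => intro _; exact ⟨∅, rfl, fun i hi => absurd hi (Finset.notMem_empty i)⟩
  | succ k ih =>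
    intro hk
    obtain ⟨B, hBcard, hBdom⟩ := ih (by omega)
    have hBc : Bᶜ.Nonempty := by
      rw [← Finset.card_pos, Finset.card_compl, Fintype.card_fin, hBcard]
      omega
    obtain ⟨j0, hj0, hmax⟩ := Finset.exists_max_image Bᶜ r hBc
    have hj0B : j0 ∉ B := Finset.mem_compl.mp hj0
    refine ⟨insert j0 B, ?_, ?_⟩
    · rw [Finset.card_insert_of_notMem hj0B, hBcard]
    · intro i hi j hj
      rw [Finset.mem_insert] at hi
      have hjB : j ∉ B := fun h => hj (Finset.mem_insert_of_mem h)
      rcases hi with rfl | hiB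
      · exact hmax j (Finset.mem_compl.mpr hjB)
      · exact hBdom i hiB j hjB

section Ext

variable {A : Matrix (Fin M) (Fin N) ℝ} {δ : ℝ}

lemma rr_split (E : Matrix (Fin N) (Fin L) ℝ) (B : Finset (Fin N)) :
    E = rr E B + rr E Bᶜ := by
  funext i j
  by_cases h : i ∈ B <;> simp [rr, h]

/-- auxiliary induction for the RIP extension lemma -/
lemma ext_aux {s : ℕ} (hRIP : RIP A s δ) (hδ0 : 0 ≤ δ) (hs1 : 1 ≤ s) (hsN : s ≤ N) :
    ∀ n, ∀ E : Matrix (Fin N) (Fin L) ℝ, ∀ B : Finset (Fin N), B.card = s →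
    (∀ i ∈ B, ∀ j ∉ B, rowNorm E j ≤ rowNorm E i) →
    {i | E i ≠ 0}.ncard ≤ s + n →
    frob (A * E) ≤ Real.sqrt (1 + δ) * (frob (rr E B) + norm21 E / Real.sqrt s) := by
  have hn21 : ∀ E : Matrix (Fin N) (Fin L) ℝ, 0 ≤ norm21 E / Real.sqrt s :=
    fun E => div_nonneg (norm21_nonneg E) (Real.sqrt_nonneg _)
  have hsq : (0:ℝ) ≤ Real.sqrt (1 + δ) := Real.sqrt_nonneg _
  intro n
  induction n with
  | zero =>
    intro E B hBcard hBdom hsupp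
    -- all mass is in B
    have hall : ∀ j, j ∉ B → (∀ l, E j l = 0) := by
      intro j hj
      by_contra hcon
      push_neg at hcon
      obtain ⟨l, hl⟩ := hcon
      -- row j nonzero ⇒ all rows of B nonzero ⇒ B ∪ {j} ⊆ supp, card > s
      have hrj : 0 < rowNorm E j := by
        rw [rowNorm]
        apply Real.sqrt_pos.mpr
        have h0 : (0:ℝ) < (E j l)^2 := by
          have h1 := sq_abs (E j l)
          nlinarith [pow_pos (abs_pos.mpr hl) 2]
        have hsumle : (E j l)^2 ≤ ∑ x, (E j x)^2 :=
          Finset.single_le_sum (fun i _ => sq_nonneg (E j i)) (Finset.mem_univ l)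
        linarith
      have hBsub : (B : Set (Fin N)) ⊆ {i | E i ≠ 0} := by
        intro i hiB
        simp only [Set.mem_setOf_eq]
        intro h0
        have : rowNorm E i = 0 := by
          rw [rowNorm]
          have : ∀ l, E i l = 0 := fun l => congrFun h0 l
          simp [this]
        have := hBdom i hiB j hj
        linarith
      have hjsub : j ∈ {i | E i ≠ 0} := by
        simp only [Set.mem_setOf_eq]
        intro h0
        exact hl (congrFun h0 l)
      have hsub2 : (insert j (B : Set (Fin N))) ⊆ {i | E i ≠ 0} := by
        intro i hi
        rcases Set.mem_insert_iff.mp hi with rfl | h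
        · exact hjsub
        · exact hBsub h
      have hcard2 : s + 1 ≤ {i | E i ≠ 0}.ncard := by
        have h1 : (insert j (B : Set (Fin N))).ncard = s + 1 := by
          rw [Set.ncard_insert_of_notMem (by simpa using hj) (Set.toFinite _)]
          rw [Set.ncard_coe_finset, hBcard]
        rw [← h1]
        exact Set.ncard_le_ncard hsub2 (Set.toFinite _)
      omega
    have hE : E = rr E B := by
      funext i j
      by_cases h : i ∈ B
      · simp [rr, h]
      · simp [rr, h, hall i h j]
    have hrs : rowSparse E s := by
      rw [hE]
      exact rowSparse_rr E B (le_of_eq hBcard)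
    calc frob (A * E) ≤ Real.sqrt (1 + δ) * frob E := frob_matRIP_upper hRIP hδ0 hrs
      _ = Real.sqrt (1 + δ) * frob (rr E B) := by rw [← hE]
      _ ≤ Real.sqrt (1 + δ) * (frob (rr E B) + norm21 E / Real.sqrt s) := by
          apply mul_le_mul_of_nonneg_left _ hsq
          linarith [hn21 E]
  | succ n ihn =>
    intro E B hBcard hBdom hsupp
    by_cases hz : ∀ j, j ∉ B → (∀ l, E j l = 0)
    · -- same as base case
      have hE : E = rr E B := by
        funext i j
        by_cases h : i ∈ B
        · simp [rr, h]
        · simp [rr, h, hz i h j]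
      have hrs : rowSparse E s := by
        rw [hE]; exact rowSparse_rr E B (le_of_eq hBcard)
      calc frob (A * E) ≤ Real.sqrt (1 + δ) * frob E := frob_matRIP_upper hRIP hδ0 hrs
        _ = Real.sqrt (1 + δ) * frob (rr E B) := by rw [← hE]
        _ ≤ Real.sqrt (1 + δ) * (frob (rr E B) + norm21 E / Real.sqrt s) := by
            apply mul_le_mul_of_nonneg_left _ hsq
            linarith [hn21 E]
    · push_neg at hz
      obtain ⟨j1, hj1B, l1, hl1⟩ := hz
      have hrj : 0 < rowNorm E j1 := by
        rw [rowNorm]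
        apply Real.sqrt_pos.mpr
        have h0 : (0:ℝ) < (E j1 l1)^2 := by
          have h1 := sq_abs (E j1 l1)
          nlinarith [pow_pos (abs_pos.mpr hl1) 2]
        have hsumle : (E j1 l1)^2 ≤ ∑ x, (E j1 x)^2 :=
          Finset.single_le_sum (fun i _ => sq_nonneg (E j1 i)) (Finset.mem_univ l1)
        linarith
      have hBsub : (B : Set (Fin N)) ⊆ {i | E i ≠ 0} := by
        intro i hiB
        simp only [Set.mem_setOf_eq]
        intro h0
        have h1 : rowNorm E i = 0 := by
          rw [rowNorm]
          have : ∀ l, E i l = 0 := fun l => congrFun h0 l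
          simp [this]
        have := hBdom i hiB j1 hj1B
        linarith
      set E' := rr E Bᶜ with hE'
      have hsupp' : {i | E' i ≠ 0}.ncard ≤ s + n := by
        have hsub : {i | E' i ≠ 0} ⊆ {i | E i ≠ 0} \ (B : Set (Fin N)) := by
          intro i hi
          simp only [Set.mem_setOf_eq] at hi
          by_cases hiB : i ∈ B
          · exfalso
            apply hi
            funext j
            simp [hE', rr, hiB]
          · constructor
            · simp only [Set.mem_setOf_eq]
              intro h0
              apply hi
              funext j
              have := congrFun h0 j
              simp [hE', rr, hiB] at this ⊢
              exact this
            · simpa using hiB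
        have hdiff : ({i | E i ≠ 0} \ (B : Set (Fin N))).ncard
            = {i | E i ≠ 0}.ncard - B.card := by
          rw [Set.ncard_diff hBsub (Set.toFinite _), Set.ncard_coe_finset]
        have := Set.ncard_le_ncard hsub (Set.toFinite _)
        rw [hdiff] at this
        omega
      obtain ⟨B', hB'card, hB'dom⟩ := exists_top (rowNorm E') s hsN
      have hstep := ihn E' B' hB'card hB'dom hsupp'
      -- head bound : frob (rr E' B') ≤ norm21 (rr E B) / √s
      have hrowE' : ∀ i, rowNorm E' i = if i ∈ B then 0 else rowNorm E i := by
        intro i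
        rw [hE', rowNorm_rr]
        by_cases h : i ∈ B <;> simp [h]
      obtain ⟨b0, hb0B, hb0min⟩ := Finset.exists_min_image B (rowNorm E)
        (Finset.card_pos.mp (by omega))
      have hhead : frob (rr E' B') ≤ norm21 (rr E B) / Real.sqrt s := by
        have h1 : fsq (rr E' B') ≤ s * rowNorm E b0 ^ 2 := by
          rw [fsq_rr_rowNorm]
          calc ∑ i ∈ B', rowNorm E' i ^ 2 ≤ ∑ _i ∈ B', rowNorm E b0 ^ 2 := by
                apply Finset.sum_le_sum
                intro i hi
                rw [hrowE' i]
                by_cases h : i ∈ B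
                · simp only [h, if_true]
                  nlinarith [sq_nonneg (rowNorm E b0)]
                · simp only [h, if_false]
                  have := hBdom b0 hb0B i h
                  have h2 := rowNorm_nonneg E i
                  nlinarith
            _ = s * rowNorm E b0 ^ 2 := by
                rw [Finset.sum_const, hB'card, nsmul_eq_mul]
        have h2 : (s : ℝ) * rowNorm E b0 ^ 2 ≤ (norm21 (rr E B)) ^ 2 / s := by
          have hsum : (s : ℝ) * rowNorm E b0 ≤ norm21 (rr E B) := by
            rw [norm21_rr]
            calc (s:ℝ) * rowNorm E b0 = ∑ _i ∈ B, rowNorm E b0 := by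
                  rw [Finset.sum_const, hBcard, nsmul_eq_mul]
              _ ≤ ∑ i ∈ B, rowNorm E i := Finset.sum_le_sum fun i hi => hb0min i hi
          have hspos : (0:ℝ) < s := by exact_mod_cast hs1
          rw [le_div_iff₀ hspos]
          have hb0n : 0 ≤ rowNorm E b0 := rowNorm_nonneg E b0
          nlinarith [hsum, mul_nonneg (le_of_lt hspos) hb0n]
        have h3 : fsq (rr E' B') ≤ (norm21 (rr E B)) ^ 2 / s := le_trans h1 h2
        rw [frob_eq]
        rw [show (norm21 (rr E B)) / Real.sqrt s
            = Real.sqrt ((norm21 (rr E B))^2 / s) from ?_]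
        · exact Real.sqrt_le_sqrt h3
        · rw [Real.sqrt_div (sq_nonneg _), Real.sqrt_sq (by
            rw [norm21_rr]
            exact Finset.sum_nonneg fun i _ => rowNorm_nonneg E i)]
      -- combine
      have hsplit : A * E = A * rr E B + A * E' := by
        rw [← Matrix.mul_add, ← rr_split]
      have htri : frob (A * E) ≤ frob (A * rr E B) + frob (A * E') := by
        rw [hsplit]; exact frob_add_le _ _
      have hhd : frob (A * rr E B) ≤ Real.sqrt (1 + δ) * frob (rr E B) :=
        frob_matRIP_upper hRIP hδ0 (rowSparse_rr E B (le_of_eq hBcard))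
      have h21 : norm21 (rr E B) + norm21 E' = norm21 E := norm21_split E B
      calc frob (A * E) ≤ frob (A * rr E B) + frob (A * E') := htri
        _ ≤ Real.sqrt (1 + δ) * frob (rr E B)
            + Real.sqrt (1 + δ) * (frob (rr E' B') + norm21 E' / Real.sqrt s) :=
          add_le_add hhd hstep
        _ ≤ Real.sqrt (1 + δ) * frob (rr E B)
            + Real.sqrt (1 + δ) * (norm21 (rr E B) / Real.sqrt s + norm21 E' / Real.sqrt s) := by
          apply add_le_add_right
          apply mul_le_mul_of_nonneg_left _ hsq
          exact add_le_add_left hhead _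
        _ = Real.sqrt (1 + δ) * (frob (rr E B) + norm21 E / Real.sqrt s) := by
          rw [← add_div, h21]; ring
  
/-- RIP extension to arbitrary matrices -/
lemma rip_extension {s : ℕ} (hRIP : RIP A s δ) (hδ0 : 0 ≤ δ) (hs1 : 1 ≤ s)
    (E : Matrix (Fin N) (Fin L) ℝ) :
    frob (A * E) ≤ Real.sqrt (1 + δ) * (frob E + norm21 E / Real.sqrt s) := by
  have hn21 : 0 ≤ norm21 E / Real.sqrt s :=
    div_nonneg (norm21_nonneg E) (Real.sqrt_nonneg _)
  have hsq : (0:ℝ) ≤ Real.sqrt (1 + δ) := Real.sqrt_nonneg _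
  by_cases hsN : s ≤ N
  · obtain ⟨B, hBcard, hBdom⟩ := exists_top (rowNorm E) s hsN
    have hsupp : {i | E i ≠ 0}.ncard ≤ s + N := by
      have : {i | E i ≠ 0}.ncard ≤ N := by
        have h1 := Set.ncard_le_ncard (Set.subset_univ {i | E i ≠ 0}) (Set.toFinite _)
        rwa [Set.ncard_univ, Nat.card_eq_fintype_card, Fintype.card_fin] at h1
      omega
    have := ext_aux hRIP hδ0 hs1 hsN N E B hBcard hBdom hsupp
    refine le_trans this ?_
    apply mul_le_mul_of_nonneg_left _ hsq
    exact add_le_add_left (frob_rr_le E B) _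
  · have hrs : rowSparse E s := by
      have h1 := Set.ncard_le_ncard (Set.subset_univ {i | E i ≠ 0}) (Set.toFinite _)
      rw [Set.ncard_univ, Nat.card_eq_fintype_card, Fintype.card_fin] at h1
      exact le_trans h1 (by omega)
    calc frob (A * E) ≤ Real.sqrt (1 + δ) * frob E := frob_matRIP_upper hRIP hδ0 hrs
      _ ≤ Real.sqrt (1 + δ) * (frob E + norm21 E / Real.sqrt s) := by
        apply mul_le_mul_of_nonneg_left _ hsq
        linarith

end Ext

end Facs

open Facs in
set_option maxHeartbeats 2000000 in
theorem stmt13 {M N L R K : ℕ} (A : Matrix (Fin M) (Fin N) ℝ) (δ : ℝ)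
    (hδ0 : 0 ≤ δ) (hδ : δ < 1) (hRIP : RIP A (R + K) δ)
    (X : Matrix (Fin N) (Fin L) ℝ)
    (S : Finset (Fin N)) (hS : S.card = K)
    (hSdom : ∀ i ∈ S, ∀ j ∉ S, rowNorm X j ≤ rowNorm X i)
    (XK : Matrix (Fin N) (Fin L) ℝ) (hXK : XK = restrictRows X (S : Set (Fin N)))
    (Γ : Finset (Fin N)) (hΓ : Γ.card ≤ R)
    (DΓ : Matrix {j // j ∈ Γ} (Fin M) ℝ) (hDΓ : IsPinv (colSub A Γ) DΓ)
    (W B : Matrix (Fin M) (Fin L) ℝ) (hB : B = A * X + W)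
    (V : Matrix (Fin N) (Fin L) ℝ)
    (hV : V = fun i j => if h : i ∈ Γ then (DΓ * B) ⟨i, h⟩ j else 0)
    (That : Finset (Fin N)) (hThatΓ : That ⊆ Γ) (hThatK : That.card = K)
    (hsel : ∀ i ∈ That, ∀ j ∉ That, rowNorm V j ≤ rowNorm V i)
    (DT : Matrix {j // j ∈ That} (Fin M) ℝ) (hDT : IsPinv (colSub A That) DT)
    (Xhat : Matrix (Fin N) (Fin L) ℝ)
    (hXhat : Xhat = fun i j => if h : i ∈ That then (DT * B) ⟨i, h⟩ j else 0) :
    frob (X - Xhat) ≤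
      (1 + ((3 - δ) / (1 - δ) ^ 2) * Real.sqrt (1 + δ)) * frob (X - XK) +
        (((3 - δ) / (1 - δ) ^ 2) * Real.sqrt (1 + δ) / Real.sqrt (R + K)) * norm21 (X - XK) +
        ((1 + δ) / (1 - δ) ^ 2) * frob (restrictRows X {i | i ∉ Γ}) +
        ((3 - δ) / (1 - δ) ^ 2) * frob W := by
  have hd0 : (0:ℝ) < 1 - δ := by linarith
  have hν0 : (0:ℝ) ≤ (3 - δ) / (1 - δ) ^ 2 := div_nonneg (by linarith) (sq_nonneg _)
  have ht10 : (0:ℝ) ≤ Real.sqrt (1 + δ) := Real.sqrt_nonneg _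
  have hsq0 : (0:ℝ) ≤ Real.sqrt ((R:ℝ) + K) := Real.sqrt_nonneg _
  have hC30 : (0:ℝ) ≤ (1 + δ) / (1 - δ) ^ 2 := div_nonneg (by linarith) (sq_nonneg _)
  -- degenerate case
  by_cases hs0 : R + K = 0
  · have hK0 : K = 0 := by omega
    have hSe : S = ∅ := Finset.card_eq_zero.mp (by rw [hS, hK0])
    have hTe : That = ∅ := Finset.card_eq_zero.mp (by rw [hThatK, hK0])
    have hXK0 : XK = 0 := by
      rw [hXK, hSe]
      funext i j
      simp [restrictRows, Set.indicator_apply]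
    have hXhat0 : Xhat = 0 := by
      rw [hXhat]
      funext i j
      have hiT : i ∉ That := by rw [hTe]; exact Finset.notMem_empty i
      simp [hiT]
    rw [hXK0, hXhat0]
    have h1 : (0:ℝ) ≤ ((3 - δ) / (1 - δ) ^ 2) * Real.sqrt (1 + δ) * frob (X - 0) :=
      mul_nonneg (mul_nonneg hν0 ht10) (frob_nonneg _)
    have h2 : (0:ℝ) ≤ ((3 - δ) / (1 - δ) ^ 2) * Real.sqrt (1 + δ) / Real.sqrt ((R:ℝ) + K)
        * norm21 (X - 0) :=
      mul_nonneg (div_nonneg (mul_nonneg hν0 ht10) hsq0) (norm21_nonneg _)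
    have h3 : (0:ℝ) ≤ ((1 + δ) / (1 - δ) ^ 2) * frob (restrictRows X {i | i ∉ Γ}) :=
      mul_nonneg hC30 (frob_nonneg _)
    have h4 : (0:ℝ) ≤ ((3 - δ) / (1 - δ) ^ 2) * frob W := mul_nonneg hν0 (frob_nonneg _)
    nlinarith [frob_nonneg (X - (0 : Matrix (Fin N) (Fin L) ℝ))]
  -- main case
  have hs1 : 1 ≤ R + K := by omega
  have hKR : K ≤ R := by
    have h1 : That.card ≤ Γ.card := Finset.card_le_card hThatΓ
    omega
  have hXK' : XK = rr X S := by rw [hXK, restrictRows_eq_rr]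
  have hZrows : ∀ i, i ∉ S → ∀ j, XK i j = 0 := by
    intro i hi j
    rw [hXK']
    simp [rr, hi]
  -- goal restriction term
  have hsetΓ : {i : Fin N | i ∉ Γ} = ((Γᶜ : Finset (Fin N)) : Set (Fin N)) := by
    ext i; simp
  rw [show restrictRows X {i | i ∉ Γ} = rr X Γᶜ by rw [hsetΓ, restrictRows_eq_rr]]
  -- abbreviations
  set E : Matrix (Fin N) (Fin L) ℝ := X - XK with hE
  set Wt : Matrix (Fin M) (Fin L) ℝ := A * E + W with hWt
  have hABZ : B = A * XK + Wt := by
    rw [hB, hWt, hE, Matrix.mul_sub]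
    abel
  set sd : ℝ := Real.sqrt (1 - δ) with hsd
  have hsdpos : 0 < sd := Real.sqrt_pos.mpr hd0
  have hsdsq : sd ^ 2 = 1 - δ := Real.sq_sqrt (le_of_lt hd0)
  have hsdle1 : sd ≤ 1 := by
    rw [hsd]
    exact Real.sqrt_le_one.mpr (by linarith)
  set r2 : ℝ := Real.sqrt 2 with hr2
  have hr20 : 0 ≤ r2 := Real.sqrt_nonneg _
  have hr2sq : r2 ^ 2 = 2 := Real.sq_sqrt (by norm_num)
  have hr2le : r2 ≤ 1.5 := by
    rw [hr2, show (1.5:ℝ) = Real.sqrt (1.5 ^ 2) from (Real.sqrt_sq (by norm_num)).symm]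
    exact Real.sqrt_le_sqrt (by norm_num)
  have hcast : Real.sqrt ((R + K : ℕ) : ℝ) = Real.sqrt ((R:ℝ) + K) := by push_cast; ring_nf
  -- (1) noise bound
  have hwt : frob Wt ≤ Real.sqrt (1 + δ) * (frob E + norm21 E / Real.sqrt ((R:ℝ) + K))
      + frob W := by
    have h1 : frob Wt ≤ frob (A * E) + frob W := by rw [hWt]; exact frob_add_le _ _
    have h2 := rip_extension hRIP hδ0 hs1 E
    rw [hcast] at h2
    linarith
  -- (2) decomposition over That
  set XKT : Matrix {j // j ∈ That} (Fin L) ℝ := fun i l => XK i.1 l with hXKT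
  have hrrThat : rr XK That = Facs.ext That XKT := by
    funext i j
    by_cases h : i ∈ That <;> simp [rr, Facs.ext, h, hXKT]
  have hDTB : DT * B = XKT + (DT * (A * rr XK Thatᶜ) + DT * Wt) := by
    calc DT * B = DT * (A * (rr XK That + rr XK Thatᶜ)) + DT * Wt := by
          rw [hABZ, Matrix.mul_add, ← rr_split]
      _ = DT * (colSub A That * XKT) + DT * (A * rr XK Thatᶜ)
            + DT * Wt := by
          rw [Matrix.mul_add A, Matrix.mul_add DT, hrrThat, mul_ext]
      _ = XKT + (DT * (A * rr XK Thatᶜ) + DT * Wt) := by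
          rw [← Matrix.mul_assoc, pinv_leftInv hRIP hδ (by omega) hDT, Matrix.one_mul]
          abel
  have hZTkey : XKT - DT * B = -(DT * (A * rr XK Thatᶜ) + DT * Wt) := by
    rw [hDTB]; abel
  have hdecomp : XK - Xhat = Facs.ext That (XKT - DT * B) + rr XK Thatᶜ := by
    funext i j
    by_cases h : i ∈ That
    · have hic : i ∉ Thatᶜ := by simp [h]
      simp only [Matrix.sub_apply, Matrix.add_apply, Facs.ext, rr, h, hic, dif_pos, if_false,
        hXKT]
      rw [hXhat]
      simp [h]
      rfl
    · have hic : i ∈ Thatᶜ := by simp [h]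
      simp only [Matrix.sub_apply, Matrix.add_apply, Facs.ext, rr, h, hic, dif_neg, if_true,
        not_false_iff, hXKT]
      rw [hXhat]
      simp [h]
  -- (3) row-support facts
  have hYT : ∀ i, i ∉ S \ That → ∀ j, rr XK Thatᶜ i j = 0 := by
    intro i hi j
    by_cases hT : i ∈ That
    · simp [rr, hT]
    · have hiS : i ∉ S := by
        intro hiS
        exact hi (Finset.mem_sdiff.mpr ⟨hiS, hT⟩)
      simp [rr, hT, hZrows i hiS j]
  have hcardT : (S \ That).card + That.card ≤ R + K := by
    have h1 : (S \ That).card ≤ S.card := Finset.card_le_card (Finset.sdiff_subset)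
    omega
  have hoffT : frob (DT * (A * rr XK Thatᶜ)) ≤ (δ / (1 - δ)) * frob (rr XK Thatᶜ) :=
    pinv_offdiag_mat hRIP hδ0 hδ hDT (S \ That)
      (fun i hiT => by simp [Finset.mem_sdiff, hiT]) hcardT _ hYT
  have hnoiT : frob (DT * Wt) ≤ frob Wt / sd :=
    pinv_noise_mat hRIP hδ (by omega) hDT Wt
  have hfrob1 : frob (XK - Xhat) ≤ (δ / (1 - δ)) * frob (rr XK Thatᶜ) + frob Wt / sd
      + frob (rr XK Thatᶜ) := by
    have h1 : frob (XK - Xhat)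
        ≤ frob (Facs.ext That (XKT - DT * B))
          + frob (rr XK Thatᶜ) := by
      rw [hdecomp]; exact frob_add_le _ _
    rw [frob_ext, hZTkey, frob_neg] at h1
    have h2 : frob (DT * (A * rr XK Thatᶜ) + DT * Wt)
        ≤ frob (DT * (A * rr XK Thatᶜ)) + frob (DT * Wt) := frob_add_le _ _
    linarith
  -- (4) split g over Γᶜ and Γ \ That
  have hgsplit : rr XK Thatᶜ = rr XK Γᶜ + rr XK (Γ \ That) := by
    funext i j
    by_cases hT : i ∈ That
    · have h1 : i ∈ Γ := hThatΓ hT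
      simp [rr, hT, h1]
    · by_cases hG : i ∈ Γ
      · simp [rr, hT, hG]
      · have hT2 : i ∉ That := hT
        simp [rr, hT2, hG]
  have hG1 : frob (rr XK Γᶜ) ≤ frob (rr X Γᶜ) := by
    apply frob_le_frob
    apply fsq_le_fsq
    intro i j
    by_cases h : i ∈ Γᶜ
    · by_cases hiS : i ∈ S
      · simp [rr, h, hXK', hiS]
      · simp [rr, h, hXK', hiS, sq_nonneg]
    · simp [rr, h]
  have hg : frob (rr XK Thatᶜ) ≤ frob (rr X Γᶜ) + frob (rr XK (Γ \ That)) := by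
    calc frob (rr XK Thatᶜ) ≤ frob (rr XK Γᶜ) + frob (rr XK (Γ \ That)) := by
          rw [hgsplit]; exact frob_add_le _ _
      _ ≤ frob (rr X Γᶜ) + frob (rr XK (Γ \ That)) := by linarith
  -- (5) F and its bound
  set F : Matrix (Fin N) (Fin L) ℝ := V - rr XK Γ with hF
  set XKG : Matrix {j // j ∈ Γ} (Fin L) ℝ := fun i l => XK i.1 l with hXKG
  have hrrΓ : rr XK Γ = Facs.ext Γ XKG := by
    funext i j
    by_cases h : i ∈ Γ <;> simp [rr, Facs.ext, h, hXKG]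
  have hDΓB : DΓ * B = XKG + (DΓ * (A * rr XK Γᶜ) + DΓ * Wt) := by
    calc DΓ * B = DΓ * (A * (rr XK Γ + rr XK Γᶜ)) + DΓ * Wt := by
          rw [hABZ, Matrix.mul_add, ← rr_split]
      _ = DΓ * (colSub A Γ * XKG) + DΓ * (A * rr XK Γᶜ)
            + DΓ * Wt := by
          rw [Matrix.mul_add A, Matrix.mul_add DΓ, hrrΓ, mul_ext]
      _ = XKG + (DΓ * (A * rr XK Γᶜ) + DΓ * Wt) := by
          rw [← Matrix.mul_assoc, pinv_leftInv hRIP hδ (by omega) hDΓ, Matrix.one_mul]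
          abel
  have hVext : V = Facs.ext Γ (DΓ * B) := by rw [hV]; rfl
  have hFext : F = Facs.ext Γ (DΓ * (A * rr XK Γᶜ) + DΓ * Wt) := by
    rw [hF, hVext, hrrΓ, ext_sub, hDΓB]
    congr 1
    abel
  have hYΓ : ∀ i, i ∉ S \ Γ → ∀ j, rr XK Γᶜ i j = 0 := by
    intro i hi j
    by_cases hG : i ∈ Γ
    · simp [rr, hG]
    · have hiS : i ∉ S := by
        intro hiS
        exact hi (Finset.mem_sdiff.mpr ⟨hiS, hG⟩)
      simp [rr, hG, hZrows i hiS j]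
  have hcardΓ : (S \ Γ).card + Γ.card ≤ R + K := by
    have h1 : (S \ Γ).card ≤ S.card := Finset.card_le_card (Finset.sdiff_subset)
    omega
  have hfF : frob F ≤ (δ / (1 - δ)) * frob (rr X Γᶜ) + frob Wt / sd := by
    have h1 : frob F ≤ frob (DΓ * (A * rr XK Γᶜ)) + frob (DΓ * Wt) := by
      rw [hFext, frob_ext]
      exact frob_add_le _ _
    have h2 : frob (DΓ * (A * rr XK Γᶜ)) ≤ (δ / (1 - δ)) * frob (rr XK Γᶜ) :=
      pinv_offdiag_mat hRIP hδ0 hδ hDΓ (S \ Γ)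
        (fun i hiΓ => by simp [Finset.mem_sdiff, hiΓ]) hcardΓ _ hYΓ
    have h3 : frob (DΓ * Wt) ≤ frob Wt / sd := pinv_noise_mat hRIP hδ (by omega) hDΓ Wt
    have h4 : (δ / (1 - δ)) * frob (rr XK Γᶜ) ≤ (δ / (1 - δ)) * frob (rr X Γᶜ) :=
      mul_le_mul_of_nonneg_left hG1 (div_nonneg hδ0 (le_of_lt hd0))
    linarith
  -- (6) selection
  have hVzero : ∀ i, i ∉ Γ → ∀ j, V i j = 0 := by
    intro i hi j
    rw [hV]
    simp [hi]
  have hselect : fsq (rr V (Γ \ That)) ≤ fsq (rr V (Γ \ S)) := by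
    rw [fsq_rr_rowNorm, fsq_rr_rowNorm]
    have hΓS : Γ \ S = Γ \ (S ∩ Γ) := by
      ext i; simp [Finset.mem_sdiff, Finset.mem_inter]
    rw [hΓS, Finset.sum_sdiff_eq_sub hThatΓ,
      Finset.sum_sdiff_eq_sub (Finset.inter_subset_right)]
    have hsel2 : ∑ i ∈ S ∩ Γ, rowNorm V i ^ 2 ≤ ∑ i ∈ That, rowNorm V i ^ 2 := by
      apply sel_sum _ (fun i => sq_nonneg _) That (S ∩ Γ)
      · calc (S ∩ Γ).card ≤ S.card := Finset.card_le_card Finset.inter_subset_left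
          _ = That.card := by rw [hS, hThatK]
      · intro i hi j hj
        exact pow_le_pow_left₀ (rowNorm_nonneg V j) (hsel i hi j hj) 2
    linarith
  -- (7) main row-set identity
  have h11 : rr XK (Γ \ That) = rr V ((S ∩ Γ) \ That) - rr F ((S ∩ Γ) \ That) := by
    funext i j
    by_cases hiΩ : i ∈ (S ∩ Γ) \ That
    · have hiΓT : i ∈ Γ \ That := by
        rw [Finset.mem_sdiff] at hiΩ ⊢
        exact ⟨(Finset.mem_inter.mp hiΩ.1).2, hiΩ.2⟩
      have hiΓ : i ∈ Γ := (Finset.mem_sdiff.mp hiΓT).1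
      simp only [Matrix.sub_apply, rr, hiΩ, hiΓT, hiΓ, if_true]
      rw [hF]
      simp [Matrix.sub_apply, rr, hiΓ]
    · by_cases hiΓT : i ∈ Γ \ That
      · have hiS : i ∉ S := by
          intro hiS
          rw [Finset.mem_sdiff] at hiΓT
          exact hiΩ (Finset.mem_sdiff.mpr ⟨Finset.mem_inter.mpr ⟨hiS, hiΓT.1⟩, hiΓT.2⟩)
        simp [rr, hiΩ, hiΓT, hZrows i hiS j]
      · simp [rr, hiΩ, hiΓT]
  have h12 : rr V (Γ \ S) = rr F (Γ \ S) := by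
    funext i j
    by_cases h : i ∈ Γ \ S
    · have hiΓ : i ∈ Γ := (Finset.mem_sdiff.mp h).1
      have hiS : i ∉ S := (Finset.mem_sdiff.mp h).2
      simp only [rr, h, if_true]
      rw [hF]
      simp [Matrix.sub_apply, rr, hiΓ, hZrows i hiS j]
    · simp [rr, h]
  -- (8) Pythagoras
  have hfsqF : fsq F = ∑ i, rowNorm F i ^ 2 :=
    Finset.sum_congr rfl fun i _ => (rowNorm_sq F i).symm
  have hdisjFS : Disjoint (Γ \ S) ((S ∩ Γ) \ That) := by
    rw [Finset.disjoint_left]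
    intro i hi1 hi2
    exact (Finset.mem_sdiff.mp hi1).2 (Finset.mem_inter.mp (Finset.mem_sdiff.mp hi2).1).1
  have hpyth : fsq (rr F (Γ \ S)) + fsq (rr F ((S ∩ Γ) \ That)) ≤ fsq F := by
    rw [fsq_rr_rowNorm, fsq_rr_rowNorm, ← Finset.sum_union hdisjFS, hfsqF]
    exact Finset.sum_le_sum_of_subset_of_nonneg (Finset.subset_univ _)
      (fun i _ _ => sq_nonneg _)
  have hsum2 : frob (rr F (Γ \ S)) + frob (rr F ((S ∩ Γ) \ That)) ≤ r2 * frob F := by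
    set u := frob (rr F (Γ \ S)) with hu
    set v := frob (rr F ((S ∩ Γ) \ That)) with hv
    have hu0 : 0 ≤ u := frob_nonneg _
    have hv0 : 0 ≤ v := frob_nonneg _
    have hF0 : 0 ≤ frob F := frob_nonneg _
    have husq : u ^ 2 = fsq (rr F (Γ \ S)) := frob_sq _
    have hvsq : v ^ 2 = fsq (rr F ((S ∩ Γ) \ That)) := frob_sq _
    have hFsq : (frob F) ^ 2 = fsq F := frob_sq _
    have hsq2 : u ^ 2 + v ^ 2 ≤ (frob F) ^ 2 := by
      rw [husq, hvsq, hFsq]; exact hpyth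
    exact sum_le_sqrt2 hu0 hv0 hF0 hr2sq hr20 hsq2
  -- (9) chain for the middle term
  have hmid : frob (rr XK (Γ \ That)) ≤ r2 * frob F := by
    have h1 : frob (rr XK (Γ \ That)) ≤ frob (rr V ((S ∩ Γ) \ That))
        + frob (rr F ((S ∩ Γ) \ That)) := by
      rw [h11]; exact frob_sub_le _ _
    have h2 : frob (rr V ((S ∩ Γ) \ That)) ≤ frob (rr V (Γ \ That)) := by
      apply frob_rr_le_of_subset
      intro i hi
      rw [Finset.mem_sdiff] at hi ⊢
      exact ⟨(Finset.mem_inter.mp hi.1).2, hi.2⟩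
    have h3 : frob (rr V (Γ \ That)) ≤ frob (rr V (Γ \ S)) := frob_le_frob hselect
    have h4 : frob (rr V (Γ \ S)) = frob (rr F (Γ \ S)) := by rw [h12]
    linarith
  -- (10) final assembly
  set e1 := frob E with he1
  set n21 := norm21 E with hn21e
  set G := frob (rr X Γᶜ) with hGg
  set w := frob W with hw
  set wt := frob Wt with hwt2
  set g := frob (rr XK Thatᶜ) with hgg
  set fF := frob F with hfFn
  set t1 := Real.sqrt (1 + δ) with ht1
  set sq := Real.sqrt ((R:ℝ) + K) with hsqn
  have hG0 : 0 ≤ G := frob_nonneg _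
  have hwt0 : 0 ≤ wt := frob_nonneg _
  have hg0 : 0 ≤ g := frob_nonneg _
  have hfF0 : 0 ≤ fF := frob_nonneg _
  have he10 : 0 ≤ e1 := frob_nonneg _
  have hw0 : 0 ≤ w := frob_nonneg _
  have hdd0 : 0 ≤ δ / (1 - δ) := div_nonneg hδ0 (le_of_lt hd0)
  -- combine (4),(9)
  have hgtot : g ≤ G + r2 * fF := by linarith
  -- X - Xhat ≤ e1 + frob (XK - Xhat)
  have hchain1 : frob (X - Xhat) ≤ e1 + frob (XK - Xhat) := by
    have h1 : X - Xhat = E + (XK - Xhat) := by rw [hE]; abel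
    rw [h1]
    exact frob_add_le _ _
  have hfull : frob (X - Xhat) ≤ e1 + ((1 + δ / (1 - δ)) * g + wt / sd) := by
    have h1 : (1 + δ / (1 - δ)) * g = g + (δ / (1 - δ)) * g := by ring
    linarith [hchain1, hfrob1]
  -- bound g
  have hgG : g ≤ G + r2 * ((δ / (1 - δ)) * G + wt / sd) := by
    have h1 : r2 * fF ≤ r2 * ((δ / (1 - δ)) * G + wt / sd) :=
      mul_le_mul_of_nonneg_left hfF hr20
    linarith
  have hstep : frob (X - Xhat)
      ≤ e1 + ((1 + δ / (1 - δ)) * (G + r2 * ((δ / (1 - δ)) * G + wt / sd)) + wt / sd) := by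
    have h1 : (1 + δ / (1 - δ)) * g
        ≤ (1 + δ / (1 - δ)) * (G + r2 * ((δ / (1 - δ)) * G + wt / sd)) :=
      mul_le_mul_of_nonneg_left hgG (by linarith)
    linarith
  -- constants
  have hcG : (1 + δ / (1 - δ)) * (1 + r2 * (δ / (1 - δ))) ≤ (1 + δ) / (1 - δ) ^ 2 := by
    rw [le_div_iff₀ (by positivity : (0:ℝ) < (1 - δ) ^ 2)]
    have hne : (1 - δ) ≠ 0 := sub_ne_zero.mpr (by linarith)
    have hexp : (1 + δ / (1 - δ)) * (1 + r2 * (δ / (1 - δ))) * (1 - δ) ^ 2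
        = ((1 - δ) + δ) * ((1 - δ) + r2 * δ) := by
      field_simp
    rw [hexp]
    have h1 : r2 * δ ≤ 1.5 * δ := mul_le_mul_of_nonneg_right hr2le hδ0
    have h2 : ((1 - δ) + δ) * ((1 - δ) + r2 * δ) = (1 - δ) + r2 * δ := by ring
    rw [h2]
    linarith
  have hcW : (1 + δ / (1 - δ)) * r2 / sd + 1 / sd ≤ (3 - δ) / (1 - δ) ^ 2 := by
    rw [le_div_iff₀ (by positivity : (0:ℝ) < (1 - δ) ^ 2)]
    have hne : (1 - δ) ≠ 0 := sub_ne_zero.mpr (by linarith)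
    have hsdne : sd ≠ 0 := ne_of_gt hsdpos
    have hexp : ((1 + δ / (1 - δ)) * r2 / sd + 1 / sd) * (1 - δ) ^ 2
        = (r2 + (1 - δ)) * ((1 - δ) / sd) := by
      field_simp
      ring
    rw [hexp]
    have hds : (1 - δ) / sd = sd := by
      rw [← hsdsq]
      field_simp [hsdne]
    rw [hds]
    have a1 : r2 * sd ≤ 1.5 * sd := mul_le_mul_of_nonneg_right hr2le (le_of_lt hsdpos)
    have a3 : (1 - δ) * sd ≤ (1 - δ) * 1 := mul_le_mul_of_nonneg_left hsdle1 (le_of_lt hd0)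
    have a4 : (r2 + (1 - δ)) * sd = r2 * sd + (1 - δ) * sd := by ring
    rw [a4]
    linarith
  -- put together
  have hexp2 : e1 + ((1 + δ / (1 - δ)) * (G + r2 * ((δ / (1 - δ)) * G + wt / sd)) + wt / sd)
      = e1 + ((1 + δ / (1 - δ)) * (1 + r2 * (δ / (1 - δ)))) * G
        + ((1 + δ / (1 - δ)) * r2 / sd + 1 / sd) * wt := by
    ring
  have hfinal1 : frob (X - Xhat)
      ≤ e1 + ((1 + δ) / (1 - δ) ^ 2) * G + ((3 - δ) / (1 - δ) ^ 2) * wt := by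
    rw [hexp2] at hstep
    have h1 : ((1 + δ / (1 - δ)) * (1 + r2 * (δ / (1 - δ)))) * G
        ≤ ((1 + δ) / (1 - δ) ^ 2) * G := mul_le_mul_of_nonneg_right hcG hG0
    have h2 : ((1 + δ / (1 - δ)) * r2 / sd + 1 / sd) * wt
        ≤ ((3 - δ) / (1 - δ) ^ 2) * wt := mul_le_mul_of_nonneg_right hcW hwt0
    linarith
  have hfinal2 : ((3 - δ) / (1 - δ) ^ 2) * wt
      ≤ ((3 - δ) / (1 - δ) ^ 2) * (t1 * (e1 + n21 / sq) + w) :=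
    mul_le_mul_of_nonneg_left hwt hν0
  calc frob (X - Xhat)
      ≤ e1 + ((1 + δ) / (1 - δ) ^ 2) * G
        + ((3 - δ) / (1 - δ) ^ 2) * (t1 * (e1 + n21 / sq) + w) := by linarith
    _ = (1 + ((3 - δ) / (1 - δ) ^ 2) * t1) * e1
        + (((3 - δ) / (1 - δ) ^ 2) * t1 / sq) * n21
        + ((1 + δ) / (1 - δ) ^ 2) * G
        + ((3 - δ) / (1 - δ) ^ 2) * w := by ring
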